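/- arXiv:1603.05064 — 3 statements merged into one kernel-verified Lean document; each statement's English description precedes it below -/
import Mathlib

section
/- Let f : ℝ → ℝ be strictly increasing, let p be an integer, r a real number, and suppose f(-p) ≤ r and there exists a real m* > 0 with f(-(p - m*)) = r. Define m = max(1, ⌈m*⌉). Then f(-(p - m)) ≥ r, and m is the least positive integer with this property whenever f(-(p-m)) > r; equivalently, p - m is the greatest integer z < p with f(-z) ≥ r in the strict case. -/
lemma le_max_one_ceil (x : ℝ) : x ≤ ((max 1 ⌈x⌉ : ℤ) : ℝ) :=
  (Int.le_ceil x).trans (by exact_mod_cast le_max_right 1 ⌈x⌉)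

lemma max_one_ceil_le {x : ℝ} {k : ℤ} (hk : 0 < k) (hx : x ≤ k) : max 1 ⌈x⌉ ≤ k :=
  max_le hk (Int.ceil_le.mpr hx)

theorem stmt_1_general (f : ℝ → ℝ) (hf : StrictMono f) (p : ℤ) (r : ℝ)
    (mstar : ℝ)
    (heq : f (-((p : ℝ) - mstar)) = r) (m : ℤ) (hm : m = max 1 ⌈mstar⌉) :
    r ≤ f (-((p : ℝ) - (m : ℝ))) ∧
    (r < f (-((p : ℝ) - (m : ℝ))) →
      ∀ k : ℤ, 0 < k → r < f (-((p : ℝ) - (k : ℝ))) → m ≤ k) := by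
  have hg : StrictMono fun t : ℝ => f (-((p : ℝ) - t)) := fun a b hab => hf (by linarith)
  subst hm heq
  refine ⟨hg.monotone (le_max_one_ceil mstar), fun _ k hk hrk => ?_⟩
  exact max_one_ceil_le hk (hg.lt_iff_lt.mp hrk).le

/-- Lemma 2: with `f (-p) ≤ r`, `m* > 0` solving `f (-(p - m*)) = r` and
`m = max {1, ⌈m*⌉}`, the update satisfies `f (-(p - m)) ≥ r`; moreover, in the strict
case, `m` is the least positive integer `k` with `f (-(p - k)) > r` (equivalently,
`p - m` is the greatest integer `z < p` with `f (-z) > r`). -/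
theorem stmt_1 (f : ℝ → ℝ) (hf : StrictMono f) (p : ℤ) (r : ℝ)
    (hle : f (-(p : ℝ)) ≤ r) (mstar : ℝ) (hpos : 0 < mstar)
    (heq : f (-((p : ℝ) - mstar)) = r) (m : ℤ) (hm : m = max 1 ⌈mstar⌉) :
    r ≤ f (-((p : ℝ) - (m : ℝ))) ∧
    (r < f (-((p : ℝ) - (m : ℝ))) →
      ∀ k : ℤ, 0 < k → r < f (-((p : ℝ) - (k : ℝ))) → m ≤ k) :=
  stmt_1_general f hf p r mstar heq m hm
end

section
/- Suppose (X; p, q, r) is an outcome of the model with r = 0, q defined by q_i = f_{ij}(p_{ij}) if (i,j) ∈ X and q_i = \tilde q_i otherwise, where \tilde q_i = max{ f_{ij}(p_{ij}) : (i,j) ∈ Ẽ } and each p_{ij} is the largest feasible integer price with f_{ji}(-p_{ij}) ≥ 0 (when one exists). If K = {(i,j) ∈ Ẽ_P : i unmatched in X} is empty, then for all (i,j) ∈ E and all integers c with π_low_{ij} ≤ c ≤ π̄_{ij}, either f_{ij}(c) ≤ q_i or f_{ji}(-c) ≤ r_j. -/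
/-! A buyer who strictly prefers paying `c` to not trading accepts `c`, so `c ≤ p i j` by the
maximality of `p`, and `fS i j c ≤ fS i j (p i j)`. This price is either negative, hence below
`q̃ i ≥ 0`, or makes `(i, j)` mutually acceptable, hence at most `q̃ i`. Finally `q i = q̃ i` for
every seller: a matched seller is matched inside `Ẽ_P`, where the payoff is `q̃ i`. -/

section Payoffs

variable {U V : Type*} (fS fB : U → V → ℤ → ℝ) (p : U → V → ℤ) (qtil : U → ℝ)

theorem payoff_eq_qtil {X : Set (U × V)} (q : U → ℝ)
    (hX : ∀ i j, (i, j) ∈ X → fS i j (p i j) = qtil i)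
    (hq : ∀ i j, (i, j) ∈ X → q i = fS i j (p i j))
    (hq0 : ∀ i, (∀ j, (i, j) ∉ X) → q i = qtil i) (i : U) :
    q i = qtil i := by
  by_cases hmatched : ∃ j, (i, j) ∈ X
  · obtain ⟨j, hij⟩ := hmatched
    exact (hq i j hij).trans (hX i j hij)
  · exact hq0 i (not_exists.mp hmatched)

variable {Etil : Set (U × V)}
  (hEtil : Etil = {e | 0 ≤ fS e.1 e.2 (p e.1 e.2) ∧ 0 ≤ fB e.1 e.2 (-(p e.1 e.2))})
include hEtil

theorem qtil_nonneg
    (hqtil_mem : ∀ i, (∃ j, (i, j) ∈ Etil ∧ fS i j (p i j) = qtil i) ∨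
      ((∀ j, (i, j) ∉ Etil) ∧ qtil i = 0)) (i : U) :
    0 ≤ qtil i := by
  rcases hqtil_mem i with ⟨j, hij, hmax⟩ | ⟨-, hzero⟩
  · rw [hEtil] at hij
    exact hmax ▸ hij.1
  · exact hzero.ge

theorem fS_price_le_qtil_of_buyer_accepts
    (hqtil_ub : ∀ i j, (i, j) ∈ Etil → fS i j (p i j) ≤ qtil i)
    (hqtil_mem : ∀ i, (∃ j, (i, j) ∈ Etil ∧ fS i j (p i j) = qtil i) ∨
      ((∀ j, (i, j) ∉ Etil) ∧ qtil i = 0))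
    {i : U} {j : V} (hB : 0 ≤ fB i j (-(p i j))) :
    fS i j (p i j) ≤ qtil i := by
  rcases le_or_gt 0 (fS i j (p i j)) with hS | hS
  · exact hqtil_ub i j (by rw [hEtil]; exact ⟨hS, hB⟩)
  · exact hS.le.trans (qtil_nonneg fS fB p qtil hEtil hqtil_mem i)

end Payoffs

theorem stmt_4_general {U V : Type*}
    (fS fB : U → V → ℤ → ℝ)
    (hfS : ∀ i j, StrictMono (fS i j))
    (p πlow πup : U → V → ℤ)
    -- `p i j` is the largest feasible integer price with `fB i j (-(p i j)) ≥ 0`,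
    -- when such a feasible price exists:
    (hpmax : ∀ i j, (∃ c : ℤ, πlow i j ≤ c ∧ c ≤ πup i j ∧ 0 ≤ fB i j (-c)) →
      0 ≤ fB i j (-(p i j)) ∧
      ∀ c : ℤ, πlow i j ≤ c → c ≤ πup i j → 0 ≤ fB i j (-c) → c ≤ p i j)
    -- the set `Ẽ` of mutually acceptable pairs:
    (Etil : Set (U × V))
    (hEtil : Etil = {e | 0 ≤ fS e.1 e.2 (p e.1 e.2) ∧ 0 ≤ fB e.1 e.2 (-(p e.1 e.2))})
    -- `q̃ i = max { fS i j (p i j) | (i,j) ∈ Ẽ }`, the max over the empty set being 0: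
    (qtil : U → ℝ)
    (hqtil_ub : ∀ i j, (i, j) ∈ Etil → fS i j (p i j) ≤ qtil i)
    (hqtil_mem : ∀ i, (∃ j, (i, j) ∈ Etil ∧ fS i j (p i j) = qtil i) ∨
      ((∀ j, (i, j) ∉ Etil) ∧ qtil i = 0))
    -- `Ẽ_P`:
    (EP : Set (U × V))
    (hEP : EP = {e ∈ Etil | fS e.1 e.2 (p e.1 e.2) = qtil e.1})
    -- the matching `X ⊆ Ẽ_P`:
    (X : Set (U × V)) (hXP : X ⊆ EP)
    -- the payoff vector `q`:
    (q : U → ℝ)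
    (hq : ∀ i j, (i, j) ∈ X → q i = fS i j (p i j))
    (hq0 : ∀ i, (∀ j, (i, j) ∉ X) → q i = qtil i) :
    ∀ i j, ∀ c : ℤ, πlow i j ≤ c → c ≤ πup i j →
      fS i j c ≤ q i ∨ fB i j (-c) ≤ 0 := by
  intro i j c hlo hhi
  rcases le_or_gt (fB i j (-c)) 0 with hB | hB
  · exact Or.inr hB
  left
  obtain ⟨hBp, hpmax_ij⟩ := hpmax i j ⟨c, hlo, hhi, hB.le⟩
  have hX : ∀ i j, (i, j) ∈ X → fS i j (p i j) = qtil i := fun i j hij => by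
    have hij_EP := hXP hij
    rw [hEP] at hij_EP
    exact hij_EP.2
  have hq_eq : q i = qtil i := payoff_eq_qtil fS p qtil q hX hq hq0 i
  calc fS i j c ≤ fS i j (p i j) := (hfS i j).monotone (hpmax_ij c hlo hhi hB.le)
    _ ≤ qtil i := fS_price_le_qtil_of_buyer_accepts fS fB p qtil hEtil hqtil_ub hqtil_mem hBp
    _ = q i := hq_eq.symm

/-- Lemma 1: with `r = 0`, prices initialized to the largest feasible
integer price acceptable to the buyer (when one exists), `q` defined from the matching
`X ⊆ Ẽ_P` via `q̃`, and `K = ∅` (every seller appearing in `Ẽ_P` is matched), the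
outcome satisfies condition (p2): for every pair and every feasible integer price `c`,
`fS i j c ≤ q i` or `fB i j (-c) ≤ 0 = r j`. -/
theorem stmt_4 {U V : Type*} [Fintype U] [Fintype V]
    (fS fB : U → V → ℤ → ℝ)
    (hfS : ∀ i j, StrictMono (fS i j)) (hfB : ∀ i j, StrictMono (fB i j))
    (p πlow πup : U → V → ℤ)
    (hfeas : ∀ i j, πlow i j ≤ p i j ∧ p i j ≤ πup i j)
    -- `p i j` is the largest feasible integer price with `fB i j (-(p i j)) ≥ 0`,
    -- when such a feasible price exists:
    (hpmax : ∀ i j, (∃ c : ℤ, πlow i j ≤ c ∧ c ≤ πup i j ∧ 0 ≤ fB i j (-c)) →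
      0 ≤ fB i j (-(p i j)) ∧
      ∀ c : ℤ, πlow i j ≤ c → c ≤ πup i j → 0 ≤ fB i j (-c) → c ≤ p i j)
    -- the set `Ẽ` of mutually acceptable pairs:
    (Etil : Set (U × V))
    (hEtil : Etil = {e | 0 ≤ fS e.1 e.2 (p e.1 e.2) ∧ 0 ≤ fB e.1 e.2 (-(p e.1 e.2))})
    -- `q̃ i = max { fS i j (p i j) | (i,j) ∈ Ẽ }`, the max over the empty set being 0:
    (qtil : U → ℝ)
    (hqtil_ub : ∀ i j, (i, j) ∈ Etil → fS i j (p i j) ≤ qtil i)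
    (hqtil_mem : ∀ i, (∃ j, (i, j) ∈ Etil ∧ fS i j (p i j) = qtil i) ∨
      ((∀ j, (i, j) ∉ Etil) ∧ qtil i = 0))
    -- `Ẽ_P`:
    (EP : Set (U × V))
    (hEP : EP = {e ∈ Etil | fS e.1 e.2 (p e.1 e.2) = qtil e.1})
    -- the matching `X ⊆ Ẽ_P`:
    (X : Set (U × V)) (hXP : X ⊆ EP)
    (hmatch₁ : ∀ i j j', (i, j) ∈ X → (i, j') ∈ X → j = j')
    (hmatch₂ : ∀ i i' j, (i, j) ∈ X → (i', j) ∈ X → i = i')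
    -- `K = ∅`: every seller occurring in a pair of `Ẽ_P` is matched in `X`:
    (hK : ∀ i j, (i, j) ∈ EP → ∃ j', (i, j') ∈ X)
    -- the payoff vector `q`:
    (q : U → ℝ)
    (hq : ∀ i j, (i, j) ∈ X → q i = fS i j (p i j))
    (hq0 : ∀ i, (∀ j, (i, j) ∉ X) → q i = qtil i) :
    ∀ i j, ∀ c : ℤ, πlow i j ≤ c → c ≤ πup i j →
      fS i j c ≤ q i ∨ fB i j (-c) ≤ 0 :=
  stmt_4_general fS fB hfS p πlow πup hpmax Etil hEtil qtil hqtil_ub hqtil_mem EP hEP X hXP q hq hq0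
end

section
/- For every instance of the model (finite U, V, E = U × V, integer bounds π_low ≤ π̄ and strictly increasing valuation functions f_{ij}, f_{ji} : ℤ → ℝ for each (i,j) ∈ E), there exists a pairwise-stable outcome: a matching X ⊆ E and a feasible integer price vector p (π_low ≤ p ≤ π̄ on X) together with payoffs q, r defined by q_i = f_{ij}(p_{ij}) for (i,j) ∈ X (0 if i unmatched) and r_j = f_{ji}(-p_{ij}) for (i,j) ∈ X (0 if j unmatched), such that q ≥ 0, r ≥ 0, and for every (i,j) ∈ E and every integer c ∈ [π_low_{ij}, π̄_{ij}], f_{ij}(c) ≤ q_i or f_{ji}(-c) ≤ r_j. -/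
/-!
Read the model as one-to-one matching with contracts, a contract being a seller–buyer pair with
a feasible price, and `none` standing for staying unmatched. Given the options currently held by
the buyers, each seller takes its favourite contract among those its buyer weakly prefers to what
that buyer holds, and symmetrically for buyers. After breaking ties, this map is monotone for the
order in which sellers get better off and buyers worse off, so iterating it from the sellers'
worst and the buyers' best holdings reaches a fixed point of the finite state space. At a fixed
point the two sides hold the same contracts, nobody prefers staying unmatched, and a blocking
contract would have been eligible for its seller, who would then have taken it.
-/

open Function

theorem Monotone.exists_isFixedPt_of_le_map {α : Type*} [PartialOrder α] [WellFoundedGT α]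
    {f : α → α} (hf : Monotone f) {x : α} (hx : x ≤ f x) : ∃ y, IsFixedPt f y := by
  obtain ⟨n, hn⟩ :=
    WellFoundedGT.monotone_chain_condition ⟨fun n => f^[n] x, hf.monotone_iterate_of_le_map hx⟩
  exact ⟨f^[n] x, by simpa [IsFixedPt, iterate_succ_apply'] using (hn (n + 1) n.le_succ).symm⟩

namespace MatchingWithContracts

section Best

variable {C K : Type*} [Finite C] [LinearOrder K]

lemma exists_max_option (u : Option C → K) (S : Set C) :
    ∃ o ∈ {o : Option C | ∀ x ∈ o, x ∈ S}, ∀ o' ∈ {o : Option C | ∀ x ∈ o, x ∈ S}, u o' ≤ u o :=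
  Set.exists_max_image _ u (Set.toFinite _) ⟨none, by simp⟩

noncomputable def best (u : Option C → K) (S : Set C) : Option C :=
  (exists_max_option u S).choose

lemma mem_of_mem_best {u : Option C → K} {S : Set C} {x : C} (hx : x ∈ best u S) : x ∈ S :=
  (exists_max_option u S).choose_spec.1 x hx

lemma le_best (u : Option C → K) {S : Set C} {o : Option C} (ho : ∀ x ∈ o, x ∈ S) :
    u o ≤ u (best u S) :=
  (exists_max_option u S).choose_spec.2 o ho

lemma best_mono (u : Option C → K) {S T : Set C} (h : S ⊆ T) : u (best u S) ≤ u (best u T) :=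
  le_best u fun _ hx => h (mem_of_mem_best hx)

end Best

section Respond

variable {A B C K L : Type*} [Finite C] [LinearOrder K] [LinearOrder L]
  (owner : C → A) (u : A → Option C → K) (partner : C → B) (v : B → Option C → L)

noncomputable def bestResponse (τ : B → Option C) (a : A) : Option C :=
  best (u a) {x | owner x = a ∧ v (partner x) (τ (partner x)) ≤ v (partner x) (some x)}

variable {owner u partner v}

lemma bestResponse_mono {τ τ' : B → Option C} (h : ∀ b, v b (τ' b) ≤ v b (τ b)) (a : A) :
    u a (bestResponse owner u partner v τ a) ≤ u a (bestResponse owner u partner v τ' a) :=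
  best_mono _ fun _ hx => ⟨hx.1, (h _).trans hx.2⟩

lemma none_le_bestResponse (τ : B → Option C) (a : A) :
    u a none ≤ u a (bestResponse owner u partner v τ a) :=
  le_best _ (by simp)

lemma le_bestResponse_or_lt (τ : B → Option C) (x : C) :
    u (owner x) (some x) ≤ u (owner x) (bestResponse owner u partner v τ (owner x)) ∨
      v (partner x) (some x) < v (partner x) (τ (partner x)) := by
  refine (lt_or_ge _ _).symm.imp (fun h => le_best _ ?_) id
  simpa using h

lemma bestResponse_eq_some_of_eq_some (hv : ∀ b, Injective (v b)) {μ : A → Option C}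
    {ν : B → Option C} (hμ : μ = bestResponse owner u partner v ν)
    (hν : ν = bestResponse partner v owner u μ) {a : A} {x : C} (hx : μ a = some x) :
    owner x = a ∧ ν (partner x) = some x := by
  have hxS := mem_of_mem_best (hμ ▸ hx : x ∈ bestResponse owner u partner v ν a)
  refine ⟨hxS.1, hv _ (le_antisymm hxS.2 ?_)⟩
  rw [hν]
  exact le_best _ (by simp [hxS.1, hx])

theorem exists_bestResponse_fixed [Finite A] [Finite B] (hu : ∀ a, Injective (u a))
    (hv : ∀ b, Injective (v b)) :
    ∃ (μ : A → Option C) (ν : B → Option C),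
      μ = bestResponse owner u partner v ν ∧ ν = bestResponse partner v owner u μ := by
  let key (s : (A → Option C) × (B → Option C)) : (A → K) × (B → Lᵒᵈ) :=
    (fun a => u a (s.1 a), fun b => OrderDual.toDual (v b (s.2 b)))
  have hkey : Injective key := fun s t h =>
    Prod.ext (funext fun a => hu a (congrFun (congrArg Prod.fst h) a))
      (funext fun b => hv b (congrFun (congrArg Prod.snd h) b))
  let _ : PartialOrder ((A → Option C) × (B → Option C)) := PartialOrder.lift key hkey
  let T (s : (A → Option C) × (B → Option C)) : (A → Option C) × (B → Option C) :=
    (bestResponse owner u partner v s.2, bestResponse partner v owner u s.1)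
  have hT : Monotone T := fun s t h => ⟨bestResponse_mono h.2, bestResponse_mono h.1⟩
  choose μ₀ hμ₀ using fun a => Finite.exists_min (u a)
  choose ν₀ hν₀ using fun b => Finite.exists_max (v b)
  obtain ⟨⟨μ, ν⟩, h⟩ := hT.exists_isFixedPt_of_le_map (x := (μ₀, ν₀))
    ⟨fun a => hμ₀ a _, fun b => hν₀ b _⟩
  exact ⟨μ, ν, (congrArg Prod.fst h).symm, (congrArg Prod.snd h).symm⟩

end Respond

section TieBreak

variable {C D : Type*}

-- Equally good options are told apart by reading `Option C` as `WithBot C`.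
def tieBreak (w : Option C → D) (o : Option C) : D ×ₗ WithBot C := toLex (w o, o)

lemma tieBreak_injective (w : Option C → D) : Injective (tieBreak w) :=
  fun _ _ h => congrArg Prod.snd (toLex.injective h)

lemma le_of_tieBreak_le [Preorder D] [LE C] {w : Option C → D} {o o' : Option C}
    (h : tieBreak w o ≤ tieBreak w o') : w o ≤ w o' :=
  Prod.Lex.monotone_fst _ _ h

end TieBreak

section Stable

variable {A B C K L : Type*} [LinearOrder K] [LinearOrder L]

-- `μ a = none` means that `a` is unmatched.
structure IsStable (seller : C → A) (buyer : C → B) (us : A → Option C → K)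
    (ub : B → Option C → L) (μ : A → Option C) (ν : B → Option C) : Prop where
  seller_match : ∀ a x, μ a = some x → seller x = a ∧ ν (buyer x) = some x
  buyer_match : ∀ b x, ν b = some x → buyer x = b ∧ μ (seller x) = some x
  seller_rational : ∀ a, us a none ≤ us a (μ a)
  buyer_rational : ∀ b, ub b none ≤ ub b (ν b)
  not_blocking : ∀ x, us (seller x) (some x) ≤ us (seller x) (μ (seller x)) ∨
    ub (buyer x) (some x) ≤ ub (buyer x) (ν (buyer x))

theorem isStable_of_bestResponse_fixed [Finite C] {seller : C → A} {buyer : C → B}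
    {us : A → Option C → K} {ub : B → Option C → L} (hus : ∀ a, Injective (us a))
    (hub : ∀ b, Injective (ub b)) {μ : A → Option C} {ν : B → Option C}
    (hμ : μ = bestResponse seller us buyer ub ν) (hν : ν = bestResponse buyer ub seller us μ) :
    IsStable seller buyer us ub μ ν where
  seller_match _ _ hx := bestResponse_eq_some_of_eq_some hub hμ hν hx
  buyer_match _ _ hx := bestResponse_eq_some_of_eq_some hus hν hμ hx
  seller_rational a := hμ ▸ none_le_bestResponse ν a
  buyer_rational b := hν ▸ none_le_bestResponse μ b
  not_blocking x := by
    rw [hμ]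
    exact (le_bestResponse_or_lt ν x).imp_right le_of_lt

lemma IsStable.of_tieBreak [LinearOrder C] {seller : C → A} {buyer : C → B}
    {us : A → Option C → K} {ub : B → Option C → L} {μ : A → Option C} {ν : B → Option C}
    (h : IsStable seller buyer (fun a => tieBreak (us a)) (fun b => tieBreak (ub b)) μ ν) :
    IsStable seller buyer us ub μ ν where
  seller_match := h.seller_match
  buyer_match := h.buyer_match
  seller_rational a := le_of_tieBreak_le (h.seller_rational a)
  buyer_rational b := le_of_tieBreak_le (h.buyer_rational b)
  not_blocking x := (h.not_blocking x).imp le_of_tieBreak_le le_of_tieBreak_le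

theorem exists_isStable [Finite A] [Finite B] [Finite C] (seller : C → A) (buyer : C → B)
    (us : A → Option C → K) (ub : B → Option C → L) :
    ∃ μ ν, IsStable seller buyer us ub μ ν := by
  let _ : LinearOrder C := WellOrderingRel.isWellOrder.linearOrder
  have hus (a : A) : Injective (tieBreak (us a)) := tieBreak_injective _
  have hub (b : B) : Injective (tieBreak (ub b)) := tieBreak_injective _
  obtain ⟨μ, ν, hμ, hν⟩ := exists_bestResponse_fixed (owner := seller) (partner := buyer) hus hub
  exact ⟨μ, ν, (isStable_of_bestResponse_fixed hus hub hμ hν).of_tieBreak⟩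

end Stable

open Finset

section Model

variable {U V : Type*}

abbrev Contract (πlow πup : U → V → ℤ) : Type _ :=
  Σ e : U × V, Set.Icc (πlow e.1 e.2) (πup e.1 e.2)

variable {πlow πup : U → V → ℤ}

def sellerPayoff (fS : U → V → ℤ → ℝ) : Option (Contract πlow πup) → ℝ
  | none => 0
  | some x => fS x.1.1 x.1.2 x.2

def buyerPayoff (fB : U → V → ℤ → ℝ) : Option (Contract πlow πup) → ℝ
  | none => 0
  | some x => fB x.1.1 x.1.2 (-x.2)

variable [Fintype U] [Fintype V] {μ : U → Option (Contract πlow πup)} {i i' : U} {j j' : V}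

open Classical in
noncomputable def matchedPairs (μ : U → Option (Contract πlow πup)) : Finset (U × V) :=
  univ.filter fun e => ∃ x, μ e.1 = some x ∧ x.1 = e

def price (μ : U → Option (Contract πlow πup)) (i : U) : ℤ :=
  ((μ i).map fun x => (x.2 : ℤ)).getD 0

lemma mem_matchedPairs : (i, j) ∈ matchedPairs μ ↔ ∃ c, μ i = some ⟨(i, j), c⟩ := by
  simp only [matchedPairs, mem_filter, mem_univ, true_and]
  constructor
  · rintro ⟨⟨e, c⟩, hμ, rfl⟩
    exact ⟨c, hμ⟩
  · rintro ⟨c, hμ⟩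
    exact ⟨_, hμ, rfl⟩

lemma matchedPairs_right_unique (h : (i, j) ∈ matchedPairs μ)
    (h' : (i, j') ∈ matchedPairs μ) : j = j' := by
  obtain ⟨c, hc⟩ := mem_matchedPairs.1 h
  obtain ⟨c', hc'⟩ := mem_matchedPairs.1 h'
  rw [hc] at hc'
  simp only [Option.some.injEq, Sigma.mk.injEq, Prod.mk.injEq, true_and] at hc'
  exact hc'.1

lemma price_mem_Icc (h : (i, j) ∈ matchedPairs μ) :
    πlow i j ≤ price μ i ∧ price μ i ≤ πup i j := by
  obtain ⟨c, hc⟩ := mem_matchedPairs.1 h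
  simp only [price, hc, Option.map_some, Option.getD_some]
  exact c.2

lemma sellerPayoff_of_mem (fS : U → V → ℤ → ℝ) (h : (i, j) ∈ matchedPairs μ) :
    sellerPayoff fS (μ i) = fS i j (price μ i) := by
  obtain ⟨c, hc⟩ := mem_matchedPairs.1 h
  simp [price, hc, sellerPayoff]

lemma buyerPayoff_of_mem (fB : U → V → ℤ → ℝ) (h : (i, j) ∈ matchedPairs μ) :
    buyerPayoff fB (μ i) = fB i j (-price μ i) := by
  obtain ⟨c, hc⟩ := mem_matchedPairs.1 h
  simp [price, hc, buyerPayoff]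

variable {K L : Type*} [LinearOrder K] [LinearOrder L] {us : U → Option (Contract πlow πup) → K}
  {ub : V → Option (Contract πlow πup) → L} {ν : V → Option (Contract πlow πup)}
  (hst : IsStable (fun x => x.1.1) (fun x => x.1.2) us ub μ ν)
include hst

lemma IsStable.buyer_eq_of_mem (h : (i, j) ∈ matchedPairs μ) : ν j = μ i := by
  obtain ⟨c, hc⟩ := mem_matchedPairs.1 h
  rw [hc, (hst.seller_match _ _ hc).2]

lemma IsStable.matchedPairs_left_unique (h : (i, j) ∈ matchedPairs μ)
    (h' : (i', j) ∈ matchedPairs μ) : i = i' := by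
  obtain ⟨c, hc⟩ := mem_matchedPairs.1 h
  obtain ⟨c', hc'⟩ := mem_matchedPairs.1 h'
  have := (hst.buyer_eq_of_mem h).symm.trans (hst.buyer_eq_of_mem h')
  rw [hc, hc'] at this
  simp only [Option.some.injEq, Sigma.mk.injEq, Prod.mk.injEq, and_true] at this
  exact this.1

lemma IsStable.seller_eq_none (h : ∀ j, (i, j) ∉ matchedPairs μ) : μ i = none := by
  rcases hμ : μ i with _ | ⟨⟨i', j⟩, c⟩
  · rfl
  · obtain rfl : i' = i := (hst.seller_match _ _ hμ).1
    exact absurd (mem_matchedPairs.2 ⟨c, hμ⟩) (h j)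

lemma IsStable.buyer_eq_none (h : ∀ i, (i, j) ∉ matchedPairs μ) : ν j = none := by
  rcases hν : ν j with _ | ⟨⟨i, j'⟩, c⟩
  · rfl
  · obtain ⟨rfl, hμ⟩ := hst.buyer_match _ _ hν
    exact absurd (mem_matchedPairs.2 ⟨c, hμ⟩) (h i)

end Model

end MatchingWithContracts

open MatchingWithContracts

theorem stmt_12_general {U V : Type*} [Fintype U] [Fintype V]
    (fS fB : U → V → ℤ → ℝ)
    (πlow πup : U → V → ℤ) :
    ∃ (X : Finset (U × V)) (p : U → V → ℤ) (q : U → ℝ) (r : V → ℝ),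
      -- `X` is a matching:
      (∀ i j j', (i, j) ∈ X → (i, j') ∈ X → j = j') ∧
      (∀ i i' j, (i, j) ∈ X → (i', j) ∈ X → i = i') ∧
      -- the price vector is feasible on `X`:
      (∀ i j, (i, j) ∈ X → πlow i j ≤ p i j ∧ p i j ≤ πup i j) ∧
      -- definition of the payoffs `q` and `r`:
      (∀ i j, (i, j) ∈ X → q i = fS i j (p i j)) ∧
      (∀ i, (∀ j, (i, j) ∉ X) → q i = 0) ∧
      (∀ i j, (i, j) ∈ X → r j = fB i j (-(p i j))) ∧
      (∀ j, (∀ i, (i, j) ∉ X) → r j = 0) ∧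
      -- (p1): individual rationality:
      (∀ i, 0 ≤ q i) ∧ (∀ j, 0 ≤ r j) ∧
      -- (p2): no blocking pair at any feasible integer price:
      (∀ i j, ∀ c : ℤ, πlow i j ≤ c → c ≤ πup i j →
        fS i j c ≤ q i ∨ fB i j (-c) ≤ r j) := by
  obtain ⟨μ, ν, hst⟩ := exists_isStable (C := Contract πlow πup) (fun x => x.1.1)
    (fun x => x.1.2) (fun _ => sellerPayoff fS) (fun _ => buyerPayoff fB)
  refine ⟨matchedPairs μ, fun i _ => price μ i, fun i => sellerPayoff fS (μ i),
    fun j => buyerPayoff fB (ν j), fun _ _ _ => matchedPairs_right_unique,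
    fun _ _ _ => hst.matchedPairs_left_unique, fun _ _ => price_mem_Icc,
    fun _ _ => sellerPayoff_of_mem fS, fun i h => by simp [hst.seller_eq_none h, sellerPayoff],
    fun _ _ h => (congrArg _ (hst.buyer_eq_of_mem h)).trans (buyerPayoff_of_mem fB h),
    fun j h => by simp [hst.buyer_eq_none h, buyerPayoff],
    hst.seller_rational, hst.buyer_rational,
    fun i j c hc₁ hc₂ => hst.not_blocking ⟨(i, j), c, hc₁, hc₂⟩⟩

/-- main existence result: every instance of the discrete buyer–seller
model with strictly increasing valuations admits a pairwise-stable outcome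
`(X; p, q, r)`. -/
theorem stmt_12 {U V : Type*} [Fintype U] [Fintype V]
    (fS fB : U → V → ℤ → ℝ)
    (hfS : ∀ i j, StrictMono (fS i j)) (hfB : ∀ i j, StrictMono (fB i j))
    (πlow πup : U → V → ℤ) (hπ : ∀ i j, πlow i j ≤ πup i j) :
    ∃ (X : Finset (U × V)) (p : U → V → ℤ) (q : U → ℝ) (r : V → ℝ),
      -- `X` is a matching:
      (∀ i j j', (i, j) ∈ X → (i, j') ∈ X → j = j') ∧
      (∀ i i' j, (i, j) ∈ X → (i', j) ∈ X → i = i') ∧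
      -- the price vector is feasible on `X`:
      (∀ i j, (i, j) ∈ X → πlow i j ≤ p i j ∧ p i j ≤ πup i j) ∧
      -- definition of the payoffs `q` and `r`:
      (∀ i j, (i, j) ∈ X → q i = fS i j (p i j)) ∧
      (∀ i, (∀ j, (i, j) ∉ X) → q i = 0) ∧
      (∀ i j, (i, j) ∈ X → r j = fB i j (-(p i j))) ∧
      (∀ j, (∀ i, (i, j) ∉ X) → r j = 0) ∧
      -- (p1): individual rationality:
      (∀ i, 0 ≤ q i) ∧ (∀ j, 0 ≤ r j) ∧
      -- (p2): no blocking pair at any feasible integer price: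
      (∀ i j, ∀ c : ℤ, πlow i j ≤ c → c ≤ πup i j →
        fS i j c ≤ q i ∨ fB i j (-c) ≤ r j) :=
  stmt_12_general fS fB πlow πup
end
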